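/- arXiv:2405.10149 — 6 statements merged into one kernel-verified Lean document; each statement's English description precedes it below -/
import Mathlib

section
/- Flattening lemma for pushouts of types: let f : X → A and g : X → B be functions between types, let C be the pushout of f and g (the set-level pushout in the category of types) with structure maps i : A → C and j : B → C satisfying i ∘ f = j ∘ g, and let P : C → Type be a type family. Then the square whose vertices are Σ (x : X), P(i(f x)); Σ (a : A), P(i a); Σ (b : B), P(j b); and Σ (c : C), P c, with the maps induced by f, g, i, j on first components (transporting the second component along the commutation identity where needed), is again a pushout square in the category of types. -/
universe u

/-- `i : A → C` and `j : B → C` exhibit `C` as the (set-level) pushout of `f : X → A` and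
`g : X → B` in the category of types: the square commutes and satisfies the universal
property of pushouts. -/
def IsTypePushout {X A B C : Type u} (f : X → A) (g : X → B) (i : A → C) (j : B → C) : Prop :=
  (∀ x, i (f x) = j (g x)) ∧
    ∀ (Z : Type u) (u : A → Z) (v : B → Z), (∀ x, u (f x) = v (g x)) →
      ∃! w : C → Z, (∀ a, w (i a) = u a) ∧ (∀ b, w (j b) = v b)

/-! The universal property of a pushout of types is non-dependent; applying it with target the
total space `Σ c, Q c` and using uniqueness to see that the resulting map is a section of the
projection yields the dependent eliminator. Applied to `Q c := P c → Z` this eliminator is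
exactly the existence half of the flattened universal property; uniqueness follows because
`i` and `j` are jointly surjective. -/

namespace IsTypePushout

variable {X A B C : Type u} {f : X → A} {g : X → B} {i : A → C} {j : B → C}

theorem hom_ext (h : IsTypePushout f g i j) {Z : Type u} {w w' : C → Z}
    (hi : ∀ a, w (i a) = w' (i a)) (hj : ∀ b, w (j b) = w' (j b)) : w = w' := by
  obtain ⟨_, -, huniq⟩ := h.2 Z (w ∘ i) (w ∘ j) fun x => congrArg w (h.1 x)
  exact (huniq w ⟨fun _ => rfl, fun _ => rfl⟩).trans
    (huniq w' ⟨fun a => (hi a).symm, fun b => (hj b).symm⟩).symm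

theorem jointly_surjective (h : IsTypePushout f g i j) (c : C) :
    (∃ a, i a = c) ∨ ∃ b, j b = c := by
  have hcover := congrFun (h.hom_ext (w := fun _ => ULift.up.{u} True)
    (w' := fun c => ULift.up ((∃ a, i a = c) ∨ ∃ b, j b = c))
    (fun a => by simp) (fun b => by simp)) c
  simpa using hcover

theorem exists_dependent_elim (h : IsTypePushout f g i j) (Q : C → Type u)
    (s : ∀ a, Q (i a)) (t : ∀ b, Q (j b)) (hst : ∀ x, s (f x) ≍ t (g x)) :
    ∃ w : ∀ c, Q c, (∀ a, w (i a) = s a) ∧ ∀ b, w (j b) = t b := by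
  obtain ⟨w, ⟨hwi, hwj⟩, -⟩ :=
    h.2 (Σ c, Q c) (fun a => ⟨i a, s a⟩) (fun b => ⟨j b, t b⟩)
      fun x => Sigma.ext (h.1 x) (hst x)
  have hsection : (fun c => (w c).1) = id :=
    h.hom_ext (fun a => congrArg Sigma.fst (hwi a)) (fun b => congrArg Sigma.fst (hwj b))
  refine ⟨fun c => cast (congrArg Q (congrFun hsection c)) (w c).2, fun a => ?_, fun b => ?_⟩
  · exact eq_of_heq ((cast_heq _ _).trans (Sigma.ext_iff.1 (hwi a)).2)
  · exact eq_of_heq ((cast_heq _ _).trans (Sigma.ext_iff.1 (hwj b)).2)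

end IsTypePushout

/-- Flattening lemma for pushouts of types: if `C` is the pushout of `f : X → A` and
`g : X → B`, with structure maps `i, j` satisfying `i ∘ f = j ∘ g`, and `P : C → Type` is a
type family, then the square of total spaces, with maps induced by `f, g, i, j` on first
components (transporting the second component along the commutation identity where needed),
is again a pushout square in the category of types. -/
theorem flattening_pushout {X A B C : Type u} (f : X → A) (g : X → B) (i : A → C) (j : B → C)
    (hcomm : ∀ x, i (f x) = j (g x)) (hpo : IsTypePushout f g i j) (P : C → Type u) :
    IsTypePushout
      (fun xp : Σ x : X, P (i (f x)) => (⟨f xp.1, xp.2⟩ : Σ a : A, P (i a)))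
      (fun xp : Σ x : X, P (i (f x)) =>
        (⟨g xp.1, cast (congrArg P (hcomm xp.1)) xp.2⟩ : Σ b : B, P (j b)))
      (fun ap : Σ a : A, P (i a) => (⟨i ap.1, ap.2⟩ : Σ c : C, P c))
      (fun bp : Σ b : B, P (j b) => (⟨j bp.1, bp.2⟩ : Σ c : C, P c)) := by
  refine ⟨fun xp => Sigma.ext (hcomm xp.1) (cast_heq _ _).symm, fun Z u v huv => ?_⟩
  have hfibre : ∀ x, (fun p => u ⟨f x, p⟩) ≍ fun q => v ⟨g x, q⟩ := fun x =>
    Function.hfunext (congrArg P (hcomm x)) fun p q hpq => by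
      obtain rfl : q = cast (congrArg P (hcomm x)) p :=
        eq_of_heq (hpq.symm.trans (cast_heq _ _).symm)
      exact heq_of_eq (huv ⟨x, p⟩)
  obtain ⟨w, hwi, hwj⟩ := hpo.exists_dependent_elim (fun c => P c → Z)
    (fun a p => u ⟨a, p⟩) (fun b q => v ⟨b, q⟩) hfibre
  refine ⟨fun cp => w cp.1 cp.2, ⟨fun ap => congrFun (hwi ap.1) ap.2,
    fun bp => congrFun (hwj bp.1) bp.2⟩, fun w' ⟨hw'i, hw'j⟩ => funext fun ⟨c, p⟩ => ?_⟩
  rcases hpo.jointly_surjective c with ⟨a, rfl⟩ | ⟨b, rfl⟩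
  · exact (hw'i ⟨a, p⟩).trans (congrFun (hwi a) p).symm
  · exact (hw'j ⟨b, p⟩).trans (congrFun (hwj b) p).symm
end

section
/- Flattening lemma for coequalizers of types: let f, g : A → B be functions between types, let h : B → C exhibit C as the coequalizer of f and g in the category of types (so h ∘ f = h ∘ g), and let P : C → Type be a type family. Then the diagram with parallel maps from Σ (a : A), P(h(f a)) to Σ (b : B), P(h b), given respectively by (a, x) ↦ (f a, x) and (a, x) ↦ (g a, transport of x along the identity h(f a) = h(g a)), followed by the map (b, x) ↦ (h b, x) to Σ (c : C), P c, is again a coequalizer diagram in the category of types. -/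
universe u

/-- `h : B → C` exhibits `C` as the (set-level) coequalizer of `f, g : A → B` in the category
of types: `h ∘ f = h ∘ g` and the universal property of coequalizers holds. -/
def IsTypeCoequalizer {A B C : Type u} (f g : A → B) (h : B → C) : Prop :=
  (∀ a, h (f a) = h (g a)) ∧
    ∀ (Z : Type u) (u : B → Z), (∀ a, u (f a) = u (g a)) →
      ∃! w : C → Z, ∀ b, w (h b) = u b

section Aux

variable {A B C : Type u} (f g : A → B) (h : B → C)

/-- the generating relation -/
def coeqRel (b b' : B) : Prop := ∃ a, f a = b ∧ g a = b'

theorem coeq_surj (hcoeq : IsTypeCoequalizer f g h) : ∀ c, ∃ b, h b = c := by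
  obtain ⟨hc, huniv⟩ := hcoeq
  obtain ⟨w, hw, hwu⟩ := huniv (ULift Prop) (fun _ => ⟨True⟩) (fun _ => rfl)
  have h1 : (fun _ : C => (⟨True⟩ : ULift Prop)) = w := hwu _ fun _ => rfl
  have h2 : (fun c : C => (⟨∃ b, h b = c⟩ : ULift Prop)) = w := by
    refine hwu _ fun b => ?_
    exact congrArg ULift.up (propext ⟨fun _ => trivial, fun _ => ⟨b, rfl⟩⟩)
  intro c
  have := congrArg ULift.down (congrFun (h2.trans h1.symm) c)
  simp only at this
  exact this ▸ trivial

theorem coeq_exact (hcoeq : IsTypeCoequalizer f g h) :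
    ∀ b b', h b = h b' → Relation.EqvGen (coeqRel f g) b b' := by
  obtain ⟨w, hw, -⟩ := hcoeq.2 (Quot (coeqRel f g)) (Quot.mk _)
    (fun a => Quot.sound ⟨a, rfl, rfl⟩)
  intro b b' e
  have : Quot.mk (coeqRel f g) b = Quot.mk (coeqRel f g) b' := by
    rw [← hw b, ← hw b', e]
  exact Quot.eqvGen_exact this

theorem eqvGen_h (hcomm : ∀ a, h (f a) = h (g a)) {b b' : B}
    (e : Relation.EqvGen (coeqRel f g) b b') : h b = h b' := by
  induction e with
  | rel x y hr => obtain ⟨a, ha1, ha2⟩ := hr; subst ha1; subst ha2; exact hcomm a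
  | refl x => rfl
  | symm x y _ ih => exact ih.symm
  | trans x y z _ _ ih1 ih2 => exact ih1.trans ih2

end Aux

/-- Flattening lemma for coequalizers of types: if `h : B → C` is the coequalizer of
`f, g : A → B` (so `h ∘ f = h ∘ g`) and `P : C → Type` is a type family, then the diagram
with parallel maps from `Σ (a : A), P (h (f a))` to `Σ (b : B), P (h b)` given by
`(a, x) ↦ (f a, x)` and `(a, x) ↦ (g a, transport x)`, followed by `(b, x) ↦ (h b, x)` into
`Σ (c : C), P c`, is again a coequalizer diagram in the category of types. -/
theorem flattening_coequalizer {A B C : Type u} (f g : A → B) (h : B → C)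
    (hcomm : ∀ a, h (f a) = h (g a)) (hcoeq : IsTypeCoequalizer f g h) (P : C → Type u) :
    IsTypeCoequalizer
      (fun ax : Σ a : A, P (h (f a)) => (⟨f ax.1, ax.2⟩ : Σ b : B, P (h b)))
      (fun ax : Σ a : A, P (h (f a)) =>
        (⟨g ax.1, cast (congrArg P (hcomm ax.1)) ax.2⟩ : Σ b : B, P (h b)))
      (fun bx : Σ b : B, P (h b) => (⟨h bx.1, bx.2⟩ : Σ c : C, P c)) := by
  have hsurj := coeq_surj f g h hcoeq
  constructor
  · rintro ⟨a, x⟩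
    exact Sigma.ext (hcomm a) (cast_heq _ _).symm
  · intro Z u hu
    have key : ∀ b b', Relation.EqvGen (coeqRel f g) b b' →
        ∀ (e : h b = h b') (x : P (h b)), u ⟨b, x⟩ = u ⟨b', cast (congrArg P e) x⟩ := by
      intro b b' hev
      induction hev with
      | rel y z hr =>
        obtain ⟨a, ha1, ha2⟩ := hr
        subst ha1; subst ha2
        intro e x
        exact hu ⟨a, x⟩
      | refl y => intro e x; rfl
      | symm y z hr ih =>
        intro e x
        have e' := eqvGen_h f g h hcomm hr
        have := ih e' (cast (congrArg P e) x)
        rw [cast_cast] at this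
        exact (this.trans (congrArg (fun t => u ⟨z, t⟩) (cast_eq _ x))).symm
      | trans y z w hr1 hr2 ih1 ih2 =>
        intro e x
        have e1 := eqvGen_h f g h hcomm hr1
        have e2 := eqvGen_h f g h hcomm hr2
        rw [ih1 e1 x, ih2 e2 (cast (congrArg P e1) x), cast_cast]
    refine ⟨fun cx =>
      u ⟨(hsurj cx.1).choose, cast (congrArg P (hsurj cx.1).choose_spec.symm) cx.2⟩,
      fun bx => ?_, fun w' hw' => ?_⟩
    · obtain ⟨b, x⟩ := bx
      have e₀ : h (hsurj (h b)).choose = h b := (hsurj (h b)).choose_spec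
      have := key _ _ (coeq_exact f g h hcoeq _ _ e₀) e₀ (cast (congrArg P e₀.symm) x)
      rw [cast_cast, cast_eq] at this
      exact this
    · funext cx
      obtain ⟨c, x⟩ := cx
      obtain ⟨b, rfl⟩ := hsurj c
      have e₀ : h (hsurj (h b)).choose = h b := (hsurj (h b)).choose_spec
      have hk := key _ _ (coeq_exact f g h hcoeq _ _ e₀) e₀ (cast (congrArg P e₀.symm) x)
      rw [cast_cast, cast_eq] at hk
      exact (hw' ⟨b, x⟩).trans hk.symm
end

section
/- Sigma types preserve joins of maps: let f : A → X and g : B → X be functions between types and P : X → Type a type family. Let A ×_X B = Σ (a : A)(b : B), f a = g b be the pullback, let A ⋆_X B be the pushout of the two projections A ×_X B → A and A ×_X B → B (the join of f and g), and let f ⋆ g : A ⋆_X B → X be the induced map. Then Σ (w : A ⋆_X B), P((f ⋆ g) w) is the join over Σ (x : X), P x of the maps Σf : Σ (a : A), P(f a) → Σ (x : X), P x and Σg : Σ (b : B), P(g b) → Σ (x : X), P x; that is, the square with vertices the pullback of Σf and Σg, the types Σ (a : A), P(f a) and Σ (b : B), P(g b), and the type Σ (w : A ⋆_X B), P((f ⋆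 g) w), with the canonical maps, is a pushout square in the category of types. -/
universe u

/-!
Maps out of `Σ w : J, P (fg w)` are, after currying, sections of the family
`w ↦ (P (fg w) → Z)` over `J`. A set-level pushout admits dependent elimination into any type
family (apply its universal property to the total space and check, by uniqueness, that the
first component is the identity), so such a section is determined by its restrictions along
`inl` and `inr`, which are exactly the given maps `u` and `v` curried.
-/

namespace IsTypePushout

variable {X A B C : Type u} {f : X → A} {g : X → B} {i : A → C} {j : B → C}

theorem existsUnique_pi (h : IsTypePushout f g i j) {Q : C → Type u}
    (s : ∀ a, Q (i a)) (t : ∀ b, Q (j b)) (hst : ∀ x, s (f x) ≍ t (g x)) :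
    ∃! σ : ∀ c, Q c, (∀ a, σ (i a) = s a) ∧ ∀ b, σ (j b) = t b := by
  obtain ⟨W, ⟨hWi, hWj⟩, -⟩ := h.2 (Σ c, Q c) (fun a => ⟨i a, s a⟩) (fun b => ⟨j b, t b⟩)
    fun x => Sigma.ext (h.1 x) (hst x)
  have hfst : (fun c => (W c).1) = id :=
    h.hom_ext (fun a => congrArg Sigma.fst (hWi a)) (fun b => congrArg Sigma.fst (hWj b))
  refine ⟨fun c => cast (congrArg Q (congrFun hfst c)) (W c).2, ⟨fun a => ?_, fun b => ?_⟩,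
    fun σ ⟨hσi, hσj⟩ => funext fun c => ?_⟩
  · exact eq_of_heq ((cast_heq _ _).trans (congr_arg_heq Sigma.snd (hWi a)))
  · exact eq_of_heq ((cast_heq _ _).trans (congr_arg_heq Sigma.snd (hWj b)))
  · have hW : (fun c => (⟨c, σ c⟩ : Σ c, Q c)) = W :=
      h.hom_ext (fun a => by rw [hWi, hσi]) (fun b => by rw [hWj, hσj])
    exact eq_of_heq ((congr_arg_heq Sigma.snd (congrFun hW c)).trans (cast_heq _ _).symm)

end IsTypePushout

/-- Sigma types preserve joins of maps: let `f : A → X`, `g : B → X`, let `J = A ⋆_X B` be the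
join of `f` and `g`, i.e. the pushout (with structure maps `inl`, `inr`) of the two projections
of the pullback `A ×_X B = Σ (a : A) (b : B), f a = g b`, and let `fg : J → X` be the induced
map (`fg ∘ inl = f`, `fg ∘ inr = g`).  Then for any type family `P : X → Type`, the total space
`Σ (w : J), P (fg w)` is the join over `Σ (x : X), P x` of the maps
`Σf : Σ (a : A), P (f a) → Σ (x : X), P x` and `Σg : Σ (b : B), P (g b) → Σ (x : X), P x`:
the square formed by the pullback of `Σf` and `Σg`, the two total spaces, and
`Σ (w : J), P (fg w)`, with the canonical maps, is a pushout square of types. -/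
theorem sigma_preserves_join {A B X J : Type u} (f : A → X) (g : B → X)
    (inl : A → J) (inr : B → J)
    (hpo : IsTypePushout (fun w : {w : A × B // f w.1 = g w.2} => w.1.1)
      (fun w : {w : A × B // f w.1 = g w.2} => w.1.2) inl inr)
    (fg : J → X) (hinl : ∀ a, fg (inl a) = f a) (hinr : ∀ b, fg (inr b) = g b)
    (P : X → Type u) :
    IsTypePushout
      (fun q : {q : (Σ a : A, P (f a)) × (Σ b : B, P (g b)) //
          (⟨f q.1.1, q.1.2⟩ : Σ x : X, P x) = ⟨g q.2.1, q.2.2⟩} => q.1.1)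
      (fun q : {q : (Σ a : A, P (f a)) × (Σ b : B, P (g b)) //
          (⟨f q.1.1, q.1.2⟩ : Σ x : X, P x) = ⟨g q.2.1, q.2.2⟩} => q.1.2)
      (fun ap : Σ a : A, P (f a) =>
        (⟨inl ap.1, cast (congrArg P (hinl ap.1).symm) ap.2⟩ : Σ w : J, P (fg w)))
      (fun bp : Σ b : B, P (g b) =>
        (⟨inr bp.1, cast (congrArg P (hinr bp.1).symm) bp.2⟩ : Σ w : J, P (fg w))) := by
  refine ⟨fun ⟨⟨⟨a, p⟩, ⟨b, q⟩⟩, hpq⟩ => ?_, fun Z u v huv => ?_⟩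
  · obtain ⟨hab, hpq⟩ := Sigma.mk.inj_iff.mp hpq
    exact Sigma.ext (hpo.1 ⟨(a, b), hab⟩) ((cast_heq _ p).trans (hpq.trans (cast_heq _ q).symm))
  obtain ⟨σ, ⟨hσl, hσr⟩, hσ⟩ := hpo.existsUnique_pi (Q := fun w => P (fg w) → Z)
      (fun a p => u ⟨a, cast (congrArg P (hinl a)) p⟩)
      (fun b q => v ⟨b, cast (congrArg P (hinr b)) q⟩) fun ⟨⟨a, b⟩, hab⟩ =>
    Function.hfunext (congrArg (P ∘ fg) (hpo.1 ⟨(a, b), hab⟩)) fun p q hpq => heq_of_eq <|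
      huv ⟨(⟨a, _⟩, ⟨b, _⟩), Sigma.ext hab ((cast_heq _ p).trans (hpq.trans (cast_heq _ q).symm))⟩
  refine ⟨fun wp => σ wp.1 wp.2, ⟨fun ⟨a, p⟩ => by simp [hσl], fun ⟨b, q⟩ => by simp [hσr]⟩,
    fun w ⟨hwl, hwr⟩ => funext fun ⟨c, p⟩ => ?_⟩
  refine congrFun (congrFun (hσ (fun c p => w ⟨c, p⟩) ⟨fun a => funext fun p => ?_,
    fun b => funext fun q => ?_⟩) c) p
  · simpa using hwl ⟨a, cast (congrArg P (hinl a)) p⟩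
  · simpa using hwr ⟨b, cast (congrArg P (hinr b)) q⟩
end

section
/- Fibers preserve joins: let f : A → X and g : B → X be functions between types and let x : X. Then the fiber of f ⋆ g : A ⋆_X B → X over x is in bijection with the join of the fibers of f and g over x, i.e., with the pushout of the two projections from (fib f x) × (fib g x) to fib f x and to fib g x. -/
universe u

namespace FPJ

/-- The generating relation for the concrete pushout. -/
def R {X A B : Type u} (f : X → A) (g : X → B) : A ⊕ B → A ⊕ B → Prop :=
  fun s t => ∃ x, s = Sum.inl (f x) ∧ t = Sum.inr (g x)

/-- The concrete pushout. -/
def P {X A B : Type u} (f : X → A) (g : X → B) : Type u := Quot (R f g)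

def mkl {X A B : Type u} (f : X → A) (g : X → B) (a : A) : P f g :=
  Quot.mk (R f g) (Sum.inl a)

def mkr {X A B : Type u} (f : X → A) (g : X → B) (b : B) : P f g :=
  Quot.mk (R f g) (Sum.inr b)

theorem isPushout_P {X A B : Type u} (f : X → A) (g : X → B) :
    IsTypePushout f g (mkl f g) (mkr f g) := by
  constructor
  · intro x
    exact Quot.sound ⟨x, rfl, rfl⟩
  · intro Z u v h
    refine ⟨Quot.lift (Sum.elim u v) ?_, ⟨fun a => rfl, fun b => rfl⟩, ?_⟩
    · rintro s t ⟨x, rfl, rfl⟩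
      exact h x
    · rintro w ⟨hw1, hw2⟩
      funext z
      induction z using Quot.ind with
      | _ s =>
        cases s with
        | inl a => exact hw1 a
        | inr b => exact hw2 b

theorem pushout_unique {X A B C C' : Type u} (f : X → A) (g : X → B)
    {i : A → C} {j : B → C} {i' : A → C'} {j' : B → C'}
    (h : IsTypePushout f g i j) (h' : IsTypePushout f g i' j') :
    ∃ e : C ≃ C', (∀ a, e (i a) = i' a) ∧ (∀ b, e (j b) = j' b) := by
  obtain ⟨u, ⟨hu1, hu2⟩, -⟩ := h.2 C' i' j' h'.1
  obtain ⟨v, ⟨hv1, hv2⟩, -⟩ := h'.2 C i j h.1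
  obtain ⟨w, -, hw⟩ := h.2 C i j h.1
  obtain ⟨w', -, hw'⟩ := h'.2 C' i' j' h'.1
  have hvu : (fun c => v (u c)) = id := by
    rw [hw (fun c => v (u c))
        ⟨fun a => by show v (u (i a)) = i a; rw [hu1, hv1],
         fun b => by show v (u (j b)) = j b; rw [hu2, hv2]⟩,
      hw id ⟨fun a => rfl, fun b => rfl⟩]
  have huv : (fun c => u (v c)) = id := by
    rw [hw' (fun c => u (v c))
        ⟨fun a => by show u (v (i' a)) = i' a; rw [hv1, hu1],
         fun b => by show u (v (j' b)) = j' b; rw [hv2, hu2]⟩,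
      hw' id ⟨fun a => rfl, fun b => rfl⟩]
  exact ⟨⟨u, v, fun c => congrFun hvu c, fun c => congrFun huv c⟩, hu1, hu2⟩

section Concrete

variable {A B X : Type u} (f : A → X) (g : B → X) (x : X)

/-- The pullback span. -/
abbrev pb1 : {w : A × B // f w.1 = g w.2} → A := fun w => w.1.1
abbrev pb2 : {w : A × B // f w.1 = g w.2} → B := fun w => w.1.2

/-- The fiber span. -/
abbrev fb1 : {a : A // f a = x} × {b : B // g b = x} → {a : A // f a = x} := fun w => w.1
abbrev fb2 : {a : A // f a = x} × {b : B // g b = x} → {b : B // g b = x} := fun w => w.2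

/-- The canonical map from the concrete pushout to X. -/
def pmap : P (pb1 f g) (pb2 f g) → X :=
  Quot.lift (Sum.elim f g) (by rintro s t ⟨w, rfl, rfl⟩; exact w.2)

/-- forward map -/
def phi : P (fb1 f g x) (fb2 f g x) → {z : P (pb1 f g) (pb2 f g) // pmap f g z = x} :=
  Quot.lift
    (Sum.elim (fun a => ⟨mkl _ _ a.1, a.2⟩) (fun b => ⟨mkr _ _ b.1, b.2⟩))
    (by
      rintro s t ⟨w, rfl, rfl⟩
      apply Subtype.ext
      exact Quot.sound ⟨⟨(w.1.1, w.2.1), w.1.2.trans w.2.2.symm⟩, rfl, rfl⟩)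

theorem sigma_fun_ext {X : Type u} {T : Type u} (x : X) {y y' : X} (h : y = y')
    (k : y = x → T) (k' : y' = x → T) (hk : ∀ p : y = x, k p = k' (h ▸ p)) :
    (⟨y, k⟩ : Σ z : X, (z = x → T)) = ⟨y', k'⟩ := by
  subst h
  exact congrArg _ (funext fun p => hk p)

/-- helper for inverse: paired value and function -/
def qaux : P (pb1 f g) (pb2 f g) → Σ y : X, (y = x → P (fb1 f g x) (fb2 f g x)) :=
  Quot.lift
    (fun s => Sum.rec
      (fun a => ⟨f a, fun h => mkl _ _ ⟨a, h⟩⟩)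
      (fun b => ⟨g b, fun h => mkr _ _ ⟨b, h⟩⟩) s)
    (by
      rintro s t ⟨w, rfl, rfl⟩
      obtain ⟨⟨a, b⟩, hw⟩ := w
      exact sigma_fun_ext x hw _ _
        (fun p => Quot.sound ⟨(⟨a, p⟩, ⟨b, hw ▸ p⟩), rfl, rfl⟩))

theorem qaux_fst (z : P (pb1 f g) (pb2 f g)) : (qaux f g x z).1 = pmap f g z := by
  induction z using Quot.ind with
  | _ s => cases s <;> rfl

def psi (z : {z : P (pb1 f g) (pb2 f g) // pmap f g z = x}) : P (fb1 f g x) (fb2 f g x) :=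
  (qaux f g x z.1).2 ((qaux_fst f g x z.1).trans z.2)

theorem psi_phi (u : P (fb1 f g x) (fb2 f g x)) : psi f g x (phi f g x u) = u := by
  induction u using Quot.ind with
  | _ s => cases s <;> rfl

theorem phi_surj : Function.Surjective (phi f g x) := by
  rintro ⟨z, hz⟩
  induction z using Quot.ind with
  | _ s =>
    cases s with
    | inl a => exact ⟨mkl _ _ ⟨a, hz⟩, rfl⟩
    | inr b => exact ⟨mkr _ _ ⟨b, hz⟩, rfl⟩

noncomputable def concreteEquiv :
    P (fb1 f g x) (fb2 f g x) ≃ {z : P (pb1 f g) (pb2 f g) // pmap f g z = x} :=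
  Equiv.ofBijective (phi f g x)
    ⟨Function.LeftInverse.injective (psi_phi f g x), phi_surj f g x⟩

end Concrete

end FPJ

/-- Fibers preserve joins: let `f : A → X` and `g : B → X`, let `J = A ⋆_X B` be the join of
`f` and `g` (the pushout of the two projections of the pullback
`A ×_X B = Σ (a : A) (b : B), f a = g b`) with induced map `fg : J → X`, and let `x : X`.
If `F` is the join of the fibers `fib f x` and `fib g x`, i.e. the pushout of the two
projections from `fib f x × fib g x`, then `F` is in bijection with the fiber of `fg`
over `x`. -/
theorem fiber_preserves_join {A B X J F : Type u} (f : A → X) (g : B → X)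
    (inl : A → J) (inr : B → J)
    (hpo : IsTypePushout (fun w : {w : A × B // f w.1 = g w.2} => w.1.1)
      (fun w : {w : A × B // f w.1 = g w.2} => w.1.2) inl inr)
    (fg : J → X) (hinl : ∀ a, fg (inl a) = f a) (hinr : ∀ b, fg (inr b) = g b)
    (x : X)
    (finl : {a : A // f a = x} → F) (finr : {b : B // g b = x} → F)
    (hF : IsTypePushout (fun w : {a : A // f a = x} × {b : B // g b = x} => w.1)
      (fun w : {a : A // f a = x} × {b : B // g b = x} => w.2) finl finr) :
    Nonempty (F ≃ {w : J // fg w = x}) := by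
  classical
  obtain ⟨e1, he1l, he1r⟩ := FPJ.pushout_unique _ _ hpo (FPJ.isPushout_P (FPJ.pb1 f g) (FPJ.pb2 f g))
  obtain ⟨e2, he2l, he2r⟩ := FPJ.pushout_unique _ _ hF (FPJ.isPushout_P (FPJ.fb1 f g x) (FPJ.fb2 f g x))
  -- fg = pmap ∘ e1
  have hfg : ∀ w, fg w = FPJ.pmap f g (e1 w) := by
    obtain ⟨w0, -, hw0⟩ := hpo.2 X f g (fun w => w.2)
    have h1 := hw0 fg ⟨hinl, hinr⟩
    have h2 := hw0 (fun w => FPJ.pmap f g (e1 w))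
      ⟨fun a => by show FPJ.pmap f g (e1 (inl a)) = f a; rw [he1l]; rfl,
       fun b => by show FPJ.pmap f g (e1 (inr b)) = g b; rw [he1r]; rfl⟩
    intro w
    exact congrFun (h1.trans h2.symm) w
  have eJ : {w : J // fg w = x} ≃ {z // FPJ.pmap f g z = x} :=
    (Equiv.subtypeEquiv e1 (fun w => by rw [hfg w]))
  exact ⟨e2.trans ((FPJ.concreteEquiv f g x).trans eJ.symm)⟩
end

section
/- One step of the join construction computes the image: let f : A → B be a function between types, and let A ⋆_B A be the pushout of the two projections from the pullback A ×_B A = Σ (a a' : A), f a = f a', with induced map f ⋆ f : A ⋆_B A → B. Then f ⋆ f is injective and its range equals the range of f; consequently A ⋆_B A is in bijection with the image {b : B // ∃ a, f a = b} of f, compatibly with the maps to B. -/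
universe u

/-- One step of the join construction computes the image: let `f : A → B`, let `J = A ⋆_B A`
be the pushout (with structure maps `inl`, `inr`) of the two projections of the pullback
`A ×_B A = Σ (a a' : A), f a = f a'`, and let `ff = f ⋆ f : J → B` be the induced map.  Then
`ff` is injective with the same range as `f`; consequently `J` is in bijection with the image
`{b : B // ∃ a, f a = b}` of `f`, compatibly with the maps to `B`. -/
theorem self_join_computes_image {A B J : Type u} (f : A → B) (inl inr : A → J)
    (hpo : IsTypePushout (fun w : {w : A × A // f w.1 = f w.2} => w.1.1)
      (fun w : {w : A × A // f w.1 = f w.2} => w.1.2) inl inr)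
    (ff : J → B) (hinl : ∀ a, ff (inl a) = f a) (hinr : ∀ a, ff (inr a) = f a) :
    Function.Injective ff ∧ Set.range ff = Set.range f ∧
      ∃ e : J ≃ {b : B // ∃ a, f a = b}, ∀ w : J, (e w : B) = ff w := by
  have glue : ∀ a a' : A, f a = f a' → inl a = inr a' := by
    intro a a' h
    exact hpo.1 ⟨(a, a'), h⟩
  have eqAA : ∀ a : A, inl a = inr a := fun a => glue a a rfl
  -- surjectivity of the canonical maps: every element of J is `inl a` for some `a`
  have surj : ∀ j : J, ∃ a : A, j = inl a := by
    obtain ⟨w, hw, huniq⟩ := hpo.2 (ULift.{u} Prop) (fun _ => ⟨True⟩) (fun _ => ⟨True⟩)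
      (fun _ => rfl)
    have h1 : (fun j : J => ULift.up.{u} (∃ a : A, j = inl a)) = w := by
      apply huniq
      constructor
      · intro a
        exact congrArg ULift.up (eq_true ⟨a, rfl⟩)
      · intro a
        exact congrArg ULift.up (eq_true ⟨a, (eqAA a).symm⟩)
    have h2 : (fun _ : J => ULift.up.{u} True) = w := by
      apply huniq
      exact ⟨fun _ => rfl, fun _ => rfl⟩
    intro j
    have : ULift.up.{u} (∃ a : A, j = inl a) = ULift.up.{u} True := by
      rw [congrFun h1 j, congrFun h2 j]
    have := congrArg ULift.down this
    simp only at this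
    rw [this]
    trivial
  have hinj : Function.Injective ff := by
    intro x y hxy
    obtain ⟨a, rfl⟩ := surj x
    obtain ⟨a', rfl⟩ := surj y
    rw [hinl, hinl] at hxy
    rw [glue a a' hxy, eqAA a']
  have hrange : Set.range ff = Set.range f := by
    ext b
    constructor
    · rintro ⟨j, rfl⟩
      obtain ⟨a, rfl⟩ := surj j
      exact ⟨a, (hinl a).symm⟩
    · rintro ⟨a, rfl⟩
      exact ⟨inl a, hinl a⟩
  refine ⟨hinj, hrange, ?_⟩
  have hbij : Function.Bijective
      (fun j : J => (⟨ff j, by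
        obtain ⟨a, rfl⟩ := surj j; exact ⟨a, (hinl a).symm⟩⟩ : {b : B // ∃ a, f a = b})) := by
    constructor
    · intro x y hxy
      exact hinj (congrArg Subtype.val hxy)
    · rintro ⟨b, a, rfl⟩
      exact ⟨inl a, Subtype.ext (hinl a)⟩
  exact ⟨Equiv.ofBijective _ hbij, fun j => rfl⟩
end

section
/- Let m and n be positive integers and l : Fin n → ℤ a family of integers each coprime to m, and let ℤ/m act on S^{2n−1} coordinatewise by (a • z)_i = exp(2πi·l_i·a/m)·z_i. Then the quotient map S^{2n−1} → L(l_1,…,l_n) onto the orbit space, endowed with the quotient topology, is a covering map. -/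
/-!
`ℤ/m` acts on `S^{2n-1}` through the torus `(S¹)ⁿ`, by the homomorphism
`a ↦ (exp(2πi·lᵢ·a/m))ᵢ`. The action is free: a point of the sphere has a nonzero
coordinate `zᵢ`, and `exp(2πi·lᵢ·a/m) = 1` forces `a = 0` because `lᵢ` is a unit mod `m`.
A finite group acting freely by homeomorphisms on a compact Hausdorff space acts properly
discontinuously, so the orbit map is a covering map.
-/

open Complex Metric MulAction

theorem isCoveringMap_quot_mk_of_isCancelSMul {G E : Type*} [Group G] [Finite G]
    [TopologicalSpace E] [T2Space E] [LocallyCompactSpace E] [MulAction G E]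
    [ContinuousConstSMul G E] [IsCancelSMul G E] {r : E → E → Prop}
    (hr : ∀ x y, r x y ↔ ∃ g : G, g • x = y) : IsCoveringMap (Quot.mk r) := by
  obtain rfl : r = (orbitRel G E).r := by
    ext x y
    rw [hr, orbitRel_apply, mem_orbit_symm, mem_orbit_iff]
  exact isQuotientCoveringMap_quotientMk_of_properlyDiscontinuousSMul.isCoveringMap

theorem ZMod.isUnit_intCast_of_gcd_eq_one {m : ℕ} {k : ℤ} (h : Int.gcd k m = 1) :
    IsUnit (k : ZMod m) := by
  simpa [isCoprime_zero_right] using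
    (Int.isCoprime_iff_gcd_eq_one.mpr h).map (Int.castRingHom (ZMod m))

namespace EuclideanSpace

variable {ι : Type*} [Fintype ι]

theorem norm_torus_smul (t : ι → Circle) (z : EuclideanSpace ℂ ι) : ‖t • z‖ = ‖z‖ := by
  simp [EuclideanSpace.norm_eq]

instance : ContinuousConstSMul (ι → Circle) (EuclideanSpace ℂ ι) :=
  ⟨fun t => (PiLp.continuous_toLp 2 _).comp
    ((continuous_const_smul t).comp (PiLp.continuous_ofLp 2 _))⟩

instance (r : ℝ) : MulAction (ι → Circle) (sphere (0 : EuclideanSpace ℂ ι) r) where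
  smul t z := ⟨t • (z : EuclideanSpace ℂ ι), by simp [norm_torus_smul]⟩
  one_smul z := Subtype.ext (one_smul _ _)
  mul_smul s t z := Subtype.ext (mul_smul _ _ _)

instance (r : ℝ) : ContinuousConstSMul (ι → Circle) (sphere (0 : EuclideanSpace ℂ ι) r) :=
  ⟨fun t => ((continuous_const_smul t).comp continuous_subtype_val).subtype_mk _⟩

theorem exists_apply_eq_one_of_smul_eq_self {t : ι → Circle} {z : EuclideanSpace ℂ ι}
    (hz : z ≠ 0) (h : t • z = z) : ∃ i, t i = 1 := by
  obtain ⟨i, hi⟩ : ∃ i, z i ≠ 0 := by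
    by_contra! h0
    exact hz (PiLp.ext h0)
  refine ⟨i, Circle.coe_injective (mul_right_cancel₀ hi ?_)⟩
  simpa [Circle.smul_def] using congr($h i)

end EuclideanSpace

section Lens

variable (m : ℕ) [NeZero m] {ι : Type*}

noncomputable def lensHom (l : ι → ℤ) : Multiplicative (ZMod m) →* (ι → Circle) where
  toFun a i := ZMod.toCircle ((l i : ZMod m) * a.toAdd)
  map_one' := by ext; simp
  map_mul' a b := by ext i; simp [mul_add, AddChar.map_add_eq_mul]

variable {m}

theorem lensHom_apply (l : ι → ℤ) (a : ZMod m) (i : ι) :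
    (lensHom m l (.ofAdd a) i : ℂ) = exp (2 * Real.pi * I * l i * a.val / m) := by
  have : (l i : ZMod m) * a = ((l i * a.val : ℤ) : ZMod m) := by simp
  simp only [lensHom, MonoidHom.coe_mk, OneHom.coe_mk, toAdd_ofAdd, this,
    ZMod.toCircle_intCast]
  push_cast
  ring_nf

theorem lensHom_smul_eq_iff [Fintype ι] (l : ι → ℤ) (a : ZMod m)
    (z w : EuclideanSpace ℂ ι) :
    lensHom m l (.ofAdd a) • z = w ↔
      ∀ i, exp (2 * Real.pi * I * l i * a.val / m) * z i = w i := by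
  simp [PiLp.ext_iff, Circle.smul_def, lensHom_apply]

theorem eq_one_of_lensHom_apply_eq_one {l : ι → ℤ} {i : ι} (hl : Int.gcd (l i) m = 1)
    {a : Multiplicative (ZMod m)} (h : lensHom m l a i = 1) : a = 1 := by
  rw [← (ZMod.toCircle (N := m)).map_zero_eq_one] at h
  exact (ZMod.isUnit_intCast_of_gcd_eq_one hl).mul_right_eq_zero.mp (ZMod.injective_toCircle h)

end Lens

theorem lens_space_quotient_is_covering_map_general (m n : ℕ) (hm : 0 < m)
    (l : Fin n → ℤ) (hl : ∀ i, Int.gcd (l i) m = 1)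
    (r : Metric.sphere (0 : EuclideanSpace ℂ (Fin n)) 1 →
      Metric.sphere (0 : EuclideanSpace ℂ (Fin n)) 1 → Prop)
    (hr : ∀ z w : Metric.sphere (0 : EuclideanSpace ℂ (Fin n)) 1,
      r z w ↔ ∃ a : ZMod m, ∀ i : Fin n,
        Complex.exp (2 * (Real.pi : ℂ) * Complex.I * (l i : ℂ) * (a.val : ℂ) / (m : ℂ))
            * (z : EuclideanSpace ℂ (Fin n)) i
          = (w : EuclideanSpace ℂ (Fin n)) i) :
    IsCoveringMap (Quot.mk r) := by
  have : NeZero m := ⟨hm.ne'⟩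
  let : MulAction (Multiplicative (ZMod m)) (sphere (0 : EuclideanSpace ℂ (Fin n)) 1) :=
    .compHom _ (lensHom m l)
  have : ContinuousConstSMul (Multiplicative (ZMod m))
      (sphere (0 : EuclideanSpace ℂ (Fin n)) 1) :=
    ⟨fun a => continuous_const_smul (lensHom m l a)⟩
  have : IsCancelSMul (Multiplicative (ZMod m)) (sphere (0 : EuclideanSpace ℂ (Fin n)) 1) :=
    isCancelSMul_iff_eq_one_of_smul_eq.mpr fun a z h => by
      obtain ⟨i, hi⟩ := EuclideanSpace.exists_apply_eq_one_of_smul_eq_self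
        (ne_zero_of_mem_unit_sphere z) congr(($h : EuclideanSpace ℂ (Fin n)))
      exact eq_one_of_lensHom_apply_eq_one (hl i) hi
  refine isCoveringMap_quot_mk_of_isCancelSMul (G := Multiplicative (ZMod m))
    fun z w => (hr z w).trans ?_
  exact Multiplicative.ofAdd.exists_congr fun a =>
    (lensHom_smul_eq_iff l a z w).symm.trans (Subtype.coe_inj (a := Multiplicative.ofAdd a • z))

/-- Let `ℤ/m` act on the unit sphere `S^{2n-1} ⊆ ℂⁿ` coordinatewise by
`(a • z) i = exp(2πi·lᵢ·a/m) · z i`, where the integers `lᵢ` are coprime to `m`.  The quotient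
map from the sphere onto the lens space `L(l₁,…,lₙ)` (the orbit space, endowed with the
quotient topology) is a covering map. -/
theorem lens_space_quotient_is_covering_map (m n : ℕ) (hm : 0 < m) (hn : 0 < n)
    (l : Fin n → ℤ) (hl : ∀ i, Int.gcd (l i) m = 1)
    (r : Metric.sphere (0 : EuclideanSpace ℂ (Fin n)) 1 →
      Metric.sphere (0 : EuclideanSpace ℂ (Fin n)) 1 → Prop)
    (hr : ∀ z w : Metric.sphere (0 : EuclideanSpace ℂ (Fin n)) 1,
      r z w ↔ ∃ a : ZMod m, ∀ i : Fin n,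
        Complex.exp (2 * (Real.pi : ℂ) * Complex.I * (l i : ℂ) * (a.val : ℂ) / (m : ℂ))
            * (z : EuclideanSpace ℂ (Fin n)) i
          = (w : EuclideanSpace ℂ (Fin n)) i) :
    IsCoveringMap (Quot.mk r) :=
  lens_space_quotient_is_covering_map_general m n hm l hl r hr
end
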